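/- arXiv:1403.1155 — 4 statements merged into one kernel-verified Lean document; each statement's English description precedes it below -/
import Mathlib

section
/- Let R be a commutative ring and M an R-module such that Ext^1_R(M, E) = 0 for every Gorenstein injective R-module E. Then Ext^i_R(M, E) = 0 for all i ≥ 1 and all Gorenstein injective R-modules E. -/
open CategoryTheory Opposite Limits MonoidalCategory

universe u

variable {R : Type u} [CommRing R]

/-- `Q` is a Gorenstein projective module: it is the cokernel `Coker (P₁ → P₀)` of a totally
acyclic complex of projective modules, i.e. an exact complex of projectives which stays exact
under `Hom(-, P)` for every projective `P`. -/
def IsGorensteinProjective (Q : ModuleCat.{u} R) : Prop :=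
  ∃ C : ChainComplex (ModuleCat.{u} R) ℤ,
    (∀ i, Projective (C.X i)) ∧
    (∀ i, C.ExactAt i) ∧
    Nonempty (Q ≅ cokernel (C.d 1 0)) ∧
    ∀ P : ModuleCat.{u} R, Projective P →
      ∀ (i : ℤ) (f : C.X i ⟶ P), C.d (i + 1) i ≫ f = 0 →
        ∃ g : C.X (i - 1) ⟶ P, f = C.d i (i - 1) ≫ g

/-- `E` is a Gorenstein injective module: it is the kernel `Ker (I⁰ → I¹)` of a totally acyclic
complex of injective modules, i.e. an exact complex of injectives which stays exact under
`Hom(I, -)` for every injective `I`. -/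
def IsGorensteinInjective (E : ModuleCat.{u} R) : Prop :=
  ∃ C : CochainComplex (ModuleCat.{u} R) ℤ,
    (∀ i, Injective (C.X i)) ∧
    (∀ i, C.ExactAt i) ∧
    Nonempty (E ≅ kernel (C.d 0 1)) ∧
    ∀ I : ModuleCat.{u} R, Injective I →
      ∀ (i : ℤ) (f : I ⟶ C.X i), f ≫ C.d i (i + 1) = 0 →
        ∃ g : I ⟶ C.X (i - 1), f = g ≫ C.d (i - 1) i

/-- `M` is a Gorenstein flat module: it is a cokernel in an exact complex of flat modules which
remains exact after tensoring with any injective module. -/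
def IsGorensteinFlat (M : ModuleCat.{u} R) : Prop :=
  ∃ C : ChainComplex (ModuleCat.{u} R) ℤ,
    (∀ i, Module.Flat R (C.X i)) ∧
    (∀ i, C.ExactAt i) ∧
    Nonempty (M ≅ cokernel (C.d 1 0)) ∧
    ∀ I : ModuleCat.{u} R, Injective I → ∀ i : ℤ,
      (((tensorLeft I).mapHomologicalComplex (ComplexShape.down ℤ)).obj C).ExactAt i

/-- A short exact sequence `0 → X₁ → X₂ → X₃ → 0` is `𝒳`-pure exact if
`Hom(U, X₂) → Hom(U, X₃)` is surjective for every `U ∈ 𝒳`. -/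
def XPureExact (𝒳 : ModuleCat.{u} R → Prop) (S : ShortComplex (ModuleCat.{u} R)) : Prop :=
  ∀ U : ModuleCat.{u} R, 𝒳 U → ∀ φ : U ⟶ S.X₃, ∃ ψ : U ⟶ S.X₂, ψ ≫ S.g = φ

/-- A short exact sequence `0 → X₁ → X₂ → X₃ → 0` is `𝒳`-copure exact if
`Hom(X₂, V) → Hom(X₁, V)` is surjective for every `V ∈ 𝒳`. -/
def XCopureExact (𝒳 : ModuleCat.{u} R → Prop) (S : ShortComplex (ModuleCat.{u} R)) : Prop :=
  ∀ V : ModuleCat.{u} R, 𝒳 V → ∀ φ : S.X₁ ⟶ V, ∃ ψ : S.X₂ ⟶ V, S.f ≫ ψ = φ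

/-- `M` is `𝒳`-pure flat: `M ⊗ -` leaves every `𝒳`-pure exact short exact sequence exact. -/
def XPureFlat (𝒳 : ModuleCat.{u} R → Prop) (M : ModuleCat.{u} R) : Prop :=
  ∀ S : ShortComplex (ModuleCat.{u} R), S.ShortExact → XPureExact 𝒳 S →
    Function.Injective ((tensorLeft M).map S.f)

/-- `N` is `𝒳`-pure injective: `Hom(-, N)` leaves every `𝒳`-pure exact short exact
sequence exact. -/
def XPureInjective (𝒳 : ModuleCat.{u} R → Prop) (N : ModuleCat.{u} R) : Prop :=
  ∀ S : ShortComplex (ModuleCat.{u} R), S.ShortExact → XPureExact 𝒳 S →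
    ∀ φ : S.X₁ ⟶ N, ∃ ψ : S.X₂ ⟶ N, S.f ≫ ψ = φ

/-- `M` is `𝒳`-pure projective: `Hom(M, -)` leaves every `𝒳`-pure exact short exact
sequence exact. -/
def XPureProjective (𝒳 : ModuleCat.{u} R → Prop) (M : ModuleCat.{u} R) : Prop :=
  ∀ S : ShortComplex (ModuleCat.{u} R), S.ShortExact → XPureExact 𝒳 S →
    ∀ φ : M ⟶ S.X₃, ∃ ψ : M ⟶ S.X₂, ψ ≫ S.g = φ

/-- `GP`-pure exactness: `Hom(Q, -)` leaves the sequence exact for all Gorenstein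
projective `Q`. -/
abbrev GPPureExact (S : ShortComplex (ModuleCat.{u} R)) : Prop :=
  XPureExact IsGorensteinProjective S

/-- `GI`-copure exactness: `Hom(-, E)` leaves the sequence exact for all Gorenstein
injective `E`. -/
abbrev GICopureExact (S : ShortComplex (ModuleCat.{u} R)) : Prop :=
  XCopureExact IsGorensteinInjective S

abbrev GPPureProjective (M : ModuleCat.{u} R) : Prop :=
  XPureProjective IsGorensteinProjective M

abbrev GPPureInjective (M : ModuleCat.{u} R) : Prop :=
  XPureInjective IsGorensteinProjective M

abbrev GPPureFlat (M : ModuleCat.{u} R) : Prop :=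
  XPureFlat IsGorensteinProjective M

/-- `Ext^n_R(M, N)` vanishes. -/
abbrev extVanish (n : ℕ) (M N : ModuleCat.{u} R) : Prop :=
  Subsingleton (((Ext R (ModuleCat.{u} R) n).obj (op M)).obj N)

/-- `M` belongs to `GP^⊥`. -/
abbrev MemGPperp (M : ModuleCat.{u} R) : Prop :=
  ∀ Q : ModuleCat.{u} R, IsGorensteinProjective Q → extVanish 1 Q M

/-- `M` belongs to `^⊥GI`. -/
abbrev MemPerpGI (M : ModuleCat.{u} R) : Prop :=
  ∀ E : ModuleCat.{u} R, IsGorensteinInjective E → extVanish 1 M E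

/-- Gorenstein projective dimension of `M` is at most `n`: there is a resolution
`0 → G_n → ⋯ → G_0 → M → 0` by Gorenstein projective modules. -/
def GpdLE : ℕ → ModuleCat.{u} R → Prop
  | 0, M => IsGorensteinProjective M
  | n + 1, M =>
    ∃ S : ShortComplex (ModuleCat.{u} R), S.ShortExact ∧ Nonempty (S.X₃ ≅ M) ∧
      IsGorensteinProjective S.X₂ ∧ GpdLE n S.X₁

/-- Gorenstein injective dimension of `M` is at most `n`: there is a coresolution
`0 → M → E⁰ → ⋯ → Eⁿ → 0` by Gorenstein injective modules. -/
def GidLE : ℕ → ModuleCat.{u} R → Prop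
  | 0, M => IsGorensteinInjective M
  | n + 1, M =>
    ∃ S : ShortComplex (ModuleCat.{u} R), S.ShortExact ∧ Nonempty (S.X₁ ≅ M) ∧
      IsGorensteinInjective S.X₂ ∧ GidLE n S.X₃

/-- Gorenstein flat dimension of `M` is at most `n`. -/
def GfdLE : ℕ → ModuleCat.{u} R → Prop
  | 0, M => IsGorensteinFlat M
  | n + 1, M =>
    ∃ S : ShortComplex (ModuleCat.{u} R), S.ShortExact ∧ Nonempty (S.X₃ ≅ M) ∧
      IsGorensteinFlat S.X₂ ∧ GfdLE n S.X₁

/-- The Pontryagin dual `M⁺ = Hom_ℤ(M, ℚ/ℤ)` as an `R`-module. -/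
noncomputable def characterDual (M : ModuleCat.{u} R) : ModuleCat.{u} R :=
  ModuleCat.of R (CharacterModule M)

/-- `R` is a coherent ring: every finitely generated ideal is finitely presented. -/
def IsCoherentRing (R : Type u) [CommRing R] : Prop :=
  ∀ I : Ideal R, I.FG → Module.FinitePresentation R I

/-- `φ : G → M` is a Gorenstein projective precover. -/
def IsGPPrecover {G M : ModuleCat.{u} R} (φ : G ⟶ M) : Prop :=
  IsGorensteinProjective G ∧
    ∀ G' : ModuleCat.{u} R, IsGorensteinProjective G' →
      ∀ ψ : G' ⟶ M, ∃ χ : G' ⟶ G, χ ≫ φ = ψ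

/-- The short exact sequence `0 → Im d_{i+1} → X_i → Im d_i → 0` extracted from a complex. -/
noncomputable def imagesShortComplex (C : ChainComplex (ModuleCat.{u} R) ℤ) (i : ℤ) :
    ShortComplex (ModuleCat.{u} R) :=
  ShortComplex.mk (image.ι (C.d (i + 1) i)) (factorThruImage (C.d i (i - 1)))
    (by
      rw [← cancel_epi (factorThruImage (C.d (i + 1) i)),
        ← cancel_mono (image.ι (C.d i (i - 1)))]
      simp)

/-!
A Gorenstein injective `E = Ker(I⁰ → I¹)` sits in a short exact sequence `0 → E → I⁰ → E' → 0`
with `I⁰` injective and `E' = Ker(I¹ → I²)` again Gorenstein injective (witnessed by the same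
totally acyclic complex, shifted by one). As `Extⁿ⁺¹(M, I⁰) = 0`, the long exact sequence makes
`Extⁿ(M, E') → Extⁿ⁺¹(M, E)` surjective, so the vanishing of `Extⁿ(M, -)` on Gorenstein injectives
propagates to `Extⁿ⁺¹(M, -)`.
-/

section LinearYoneda

variable {k : Type*} [Ring k] {C : Type*} [Category C] [Abelian C] [Linear k C]

noncomputable def ChainComplex.linearYonedaMap (K : ChainComplex C ℕ) {Y Z : C} (φ : Y ⟶ Z) :
    K.linearYonedaObj k Y ⟶ K.linearYonedaObj k Z where
  f i := ModuleCat.ofHom (Linear.rightComp k (K.X i) φ)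
  comm' i j _ := by
    ext (α : K.X i ⟶ Y)
    exact (Category.assoc _ _ _).symm

noncomputable def ChainComplex.linearYonedaShortComplex (K : ChainComplex C ℕ)
    (S : ShortComplex C) : ShortComplex (CochainComplex (ModuleCat k) ℕ) :=
  ShortComplex.mk (K.linearYonedaMap S.f) (K.linearYonedaMap S.g) (by
    ext i (α : K.X i ⟶ S.X₁)
    exact (Category.assoc _ _ _).trans (by rw [S.zero, comp_zero]; rfl))

lemma ChainComplex.linearYonedaShortComplex_shortExact (K : ChainComplex C ℕ)
    [∀ i, Projective (K.X i)] {S : ShortComplex C} (hS : S.ShortExact) :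
    (K.linearYonedaShortComplex (k := k) S).ShortExact := by
  have := hS.mono_f
  have := hS.epi_g
  rw [HomologicalComplex.shortExact_iff_degreewise_shortExact]
  intro i
  refine
    { exact := ?_
      mono_f := (ModuleCat.mono_iff_injective _).2 fun (a b : K.X i ⟶ S.X₁) hab =>
        (cancel_mono S.f).1 hab
      epi_g := (ModuleCat.epi_iff_surjective _).2 fun (ψ : K.X i ⟶ S.X₃) =>
        ⟨Projective.factorThru ψ S.g, Projective.factorThru_comp ψ S.g⟩ }
  rw [ShortComplex.moduleCat_exact_iff]
  intro (ψ : K.X i ⟶ S.X₂) hψ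
  exact hS.exact.lift' ψ hψ

lemma ChainComplex.exactAt_linearYonedaObj_of_injective (K : ChainComplex C ℕ) {n : ℕ}
    (hK : K.ExactAt (n + 1)) (I : C) [Injective I] :
    (K.linearYonedaObj k I).ExactAt (n + 1) := by
  rw [HomologicalComplex.exactAt_iff' _ (n + 2) (n + 1) n (by simp) (by simp)] at hK
  rw [HomologicalComplex.exactAt_iff' _ n (n + 1) (n + 2) (by simp) (by simp),
    ShortComplex.moduleCat_exact_iff]
  intro (x : K.X (n + 1) ⟶ I) (hx : K.d (n + 2) (n + 1) ≫ x = 0)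
  exact ⟨hK.descToInjective x hx, hK.comp_descToInjective x hx⟩

variable [EnoughProjectives C]

lemma isZero_Ext_succ_of_injective (X I : C) [Injective I] (n : ℕ) :
    IsZero (((Ext k C (n + 1)).obj (op X)).obj I) := by
  let P := ProjectiveResolution.of X
  refine IsZero.of_iso ?_ (P.isoExt (n + 1) I)
  rw [← HomologicalComplex.exactAt_iff_isZero_homology]
  exact P.complex.exactAt_linearYonedaObj_of_injective (P.complex_exactAt_succ n) I

lemma isZero_Ext_succ_of_shortExact (X : C) {S : ShortComplex C} (hS : S.ShortExact) (n : ℕ)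
    (h₃ : IsZero (((Ext k C n).obj (op X)).obj S.X₃))
    (h₂ : IsZero (((Ext k C (n + 1)).obj (op X)).obj S.X₂)) :
    IsZero (((Ext k C (n + 1)).obj (op X)).obj S.X₁) := by
  let P := ProjectiveResolution.of X
  have hP := P.complex.linearYonedaShortComplex_shortExact (k := k) hS
  refine IsZero.of_iso ?_ (P.isoExt (n + 1) S.X₁)
  exact (hP.homology_exact₁ n (n + 1) rfl).isZero_X₂
    ((h₃.of_iso (P.isoExt n S.X₃).symm).eq_of_src _ _)
    ((h₂.of_iso (P.isoExt (n + 1) S.X₂).symm).eq_of_tgt _ _)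

end LinearYoneda

lemma CategoryTheory.ShortComplex.Exact.shortExact_kernel {C : Type*} [Category C] [Abelian C]
    {X Y Z : C} {f : X ⟶ Y} {g : Y ⟶ Z} {w : f ≫ g = 0} (hfg : (ShortComplex.mk f g w).Exact) :
    (ShortComplex.mk (kernel.ι f) (kernel.lift g f w) (by ext; simp)).ShortExact where
  exact := by
    let φ : ShortComplex.mk (kernel.ι f) (kernel.lift g f w) (by ext; simp) ⟶
        ShortComplex.mk (kernel.ι f) f (kernel.condition f) :=
      { τ₁ := 𝟙 _, τ₂ := 𝟙 _, τ₃ := kernel.ι g }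
    exact (ShortComplex.exact_iff_of_epi_of_isIso_of_mono φ).2 (ShortComplex.exact_kernel f)
  epi_g := (ShortComplex.exact_iff_epi_kernel_lift _).1 hfg

section UnsignedShift

variable {C : Type*} [Category C] [Abelian C]

/-- Unlike `K⟦1⟧`, no sign on the differential, so that the kernels of the differentials are
literally those of `K`. -/
def CochainComplex.unsignedShift (K : CochainComplex C ℤ) : CochainComplex C ℤ where
  X i := K.X (i + 1)
  d i j := K.d (i + 1) (j + 1)
  shape i j h := K.shape _ _ fun h' => h (by simp only [ComplexShape.up_Rel] at h' ⊢; omega)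

lemma CochainComplex.exactAt_unsignedShift_iff (K : CochainComplex C ℤ) (i : ℤ) :
    K.unsignedShift.ExactAt i ↔ K.ExactAt (i + 1) := by
  rw [HomologicalComplex.exactAt_iff' _ (i - 1) i (i + 1) (by simp) (by simp),
    HomologicalComplex.exactAt_iff' _ (i - 1 + 1) (i + 1) (i + 1 + 1)
      (by rw [CochainComplex.prev]; omega) (by rw [CochainComplex.next])]
  rfl

end UnsignedShift

lemma IsGorensteinInjective.exists_shortExact {E : ModuleCat.{u} R}
    (hE : IsGorensteinInjective E) :
    ∃ S : ShortComplex (ModuleCat.{u} R), S.ShortExact ∧ Nonempty (S.X₁ ≅ E) ∧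
      Injective S.X₂ ∧ IsGorensteinInjective S.X₃ := by
  obtain ⟨K, hinj, hexact, ⟨e⟩, hlift⟩ := hE
  have hK : (ShortComplex.mk (K.d 0 1) (K.d 1 2) (K.d_comp_d 0 1 2)).Exact :=
    (HomologicalComplex.exactAt_iff' K 0 1 2 (by simp) (by simp)).1 (hexact 1)
  refine ⟨_, hK.shortExact_kernel, ⟨e.symm⟩, hinj 0,
    K.unsignedShift, fun i => hinj (i + 1),
    fun i => (K.exactAt_unsignedShift_iff i).2 (hexact (i + 1)), ⟨Iso.refl _⟩, ?_⟩
  intro I hI i f hf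
  have := hlift I hI (i + 1) f hf
  rwa [show i + 1 - 1 = i - 1 + 1 by omega] at this

/-- If `Ext¹(M, E) = 0` for every Gorenstein injective `E`, then
`Extⁱ(M, E) = 0` for all `i ≥ 1` and all Gorenstein injective `E`. -/
theorem stmt1 {R : Type u} [CommRing R] (M : ModuleCat.{u} R)
    (h : ∀ E : ModuleCat.{u} R, IsGorensteinInjective E → extVanish 1 M E) :
    ∀ i : ℕ, 1 ≤ i → ∀ E : ModuleCat.{u} R, IsGorensteinInjective E → extVanish i M E := by
  simp only [extVanish, ← ModuleCat.isZero_iff_subsingleton] at h ⊢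
  intro i hi
  induction i, hi using Nat.le_induction with
  | base => exact h
  | succ n _ ih =>
    intro E hE
    obtain ⟨S, hS, ⟨e⟩, _, hS₃⟩ := hE.exists_shortExact
    have hS₁ := isZero_Ext_succ_of_shortExact M hS n (ih S.X₃ hS₃)
      (isZero_Ext_succ_of_injective M S.X₂ n)
    exact hS₁.of_iso (((Ext R _ (n + 1)).obj (op M)).mapIso e).symm
end

section
/- Let R be a commutative ring and P a GP-pure projective R-module. Then Ext^1_R(P, M) = 0 for every R-module M satisfying Ext^1_R(Q, M) = 0 for all Gorenstein projective R-modules Q; that is, P ∈ ^⊥(GP^⊥). -/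
open CategoryTheory Opposite Limits MonoidalCategory

universe u

variable {R : Type u} [CommRing R]

/-!
Embed `M` in an injective module `I`. Since `Ext¹(Q, M) = 0` for every Gorenstein projective `Q`,
the sequence `0 → M → I → I/M → 0` is GP-pure exact, so by GP-pure projectivity every map
`P → I/M` lifts to `I`. Dimension shifting along this sequence identifies `Ext¹(P, M)` with the
cokernel of `Hom(P, I) → Hom(P, I/M)`, which therefore vanishes.
-/

namespace CategoryTheory.ProjectiveResolution

variable {X : ModuleCat.{u} R} (P : ProjectiveResolution X)

theorem extVanish_one_iff (M : ModuleCat.{u} R) :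
    extVanish 1 X M ↔
      ∀ f : P.complex.X 1 ⟶ M, P.complex.d 2 1 ≫ f = 0 →
        ∃ g : P.complex.X 0 ⟶ M, P.complex.d 1 0 ≫ g = f := by
  rw [extVanish, ← ModuleCat.isZero_iff_subsingleton, Iso.isZero_iff (P.isoExt 1 M),
    ← HomologicalComplex.exactAt_iff_isZero_homology,
    HomologicalComplex.exactAt_iff' _ 0 1 2 (by simp) (by simp),
    ShortComplex.moduleCat_exact_iff]
  rfl

theorem exists_π_comp_eq {Y : ModuleCat.{u} R} (f : P.complex.X 0 ⟶ Y)
    (hf : P.complex.d 1 0 ≫ f = 0) : ∃ g : X ⟶ Y, P.π.f 0 ≫ g = f :=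
  ⟨P.exact₀.desc f hf, P.exact₀.g_desc f hf⟩

end CategoryTheory.ProjectiveResolution

theorem CategoryTheory.ShortComplex.ShortExact.exists_lift_of_extVanish
    {S : ShortComplex (ModuleCat.{u} R)} (hS : S.ShortExact) {Q : ModuleCat.{u} R}
    (hQ : extVanish 1 Q S.X₁) (φ : Q ⟶ S.X₃) : ∃ ψ : Q ⟶ S.X₂, ψ ≫ S.g = φ := by
  have := hS.mono_f
  have := hS.epi_g
  let P := ProjectiveResolution.of Q
  let π : P.complex.X 0 ⟶ Q := P.π.f 0
  have hπ : P.complex.d 1 0 ≫ π = 0 := P.complex_d_comp_π_f_zero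
  let h := Projective.factorThru (π ≫ φ) S.g
  have hh : h ≫ S.g = π ≫ φ := Projective.factorThru_comp _ _
  let f := hS.exact.lift (P.complex.d 1 0 ≫ h) <| by
    rw [Category.assoc, hh, reassoc_of% hπ, zero_comp]
  have hf : f ≫ S.f = P.complex.d 1 0 ≫ h := hS.exact.lift_f _ _
  obtain ⟨g, hg⟩ := (P.extVanish_one_iff S.X₁).1 hQ f <| by
    rw [← cancel_mono S.f, Category.assoc, hf, HomologicalComplex.d_comp_d_assoc, zero_comp,
      zero_comp]
  obtain ⟨ψ, hψ⟩ : ∃ ψ : Q ⟶ S.X₂, π ≫ ψ = h - g ≫ S.f := P.exists_π_comp_eq _ <| by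
    rw [Preadditive.comp_sub, reassoc_of% hg, hf, sub_self]
  have : Epi π := inferInstanceAs (Epi (P.π.f 0))
  refine ⟨ψ, (cancel_epi π).1 ?_⟩
  rw [reassoc_of% hψ, Preadditive.sub_comp, hh, Category.assoc, S.zero, comp_zero, sub_zero]

theorem xPureExact_of_extVanish {𝒳 : ModuleCat.{u} R → Prop}
    {S : ShortComplex (ModuleCat.{u} R)} (hS : S.ShortExact)
    (h : ∀ U, 𝒳 U → extVanish 1 U S.X₁) : XPureExact 𝒳 S :=
  fun U hU => hS.exists_lift_of_extVanish (h U hU)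

theorem CategoryTheory.ShortComplex.ShortExact.extVanish_of_exists_lift
    {S : ShortComplex (ModuleCat.{u} R)} (hS : S.ShortExact) [Injective S.X₂]
    {X : ModuleCat.{u} R} (hX : ∀ φ : X ⟶ S.X₃, ∃ ψ : X ⟶ S.X₂, ψ ≫ S.g = φ) :
    extVanish 1 X S.X₁ := by
  have := hS.mono_f
  let P := ProjectiveResolution.of X
  let π : P.complex.X 0 ⟶ X := P.π.f 0
  have hπ : P.complex.d 1 0 ≫ π = 0 := P.complex_d_comp_π_f_zero
  refine (P.extVanish_one_iff S.X₁).2 fun f hf => ?_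
  let h : P.complex.X 0 ⟶ S.X₂ :=
    (P.exact_succ 0).descToInjective (f ≫ S.f) (by rw [reassoc_of% hf, zero_comp])
  have hh : P.complex.d 1 0 ≫ h = f ≫ S.f := (P.exact_succ 0).comp_descToInjective _ _
  obtain ⟨u, hu⟩ : ∃ u : X ⟶ S.X₃, π ≫ u = h ≫ S.g := P.exists_π_comp_eq _ <| by
    rw [reassoc_of% hh, S.zero, comp_zero]
  obtain ⟨v, hv⟩ := hX u
  refine ⟨hS.exact.lift (h - π ≫ v) ?_, ?_⟩
  · rw [Preadditive.sub_comp, Category.assoc, hv, hu, sub_self]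
  · rw [← cancel_mono S.f, Category.assoc, hS.exact.lift_f, Preadditive.comp_sub, hh,
      reassoc_of% hπ, zero_comp, sub_zero]

/-- Every `GP`-pure projective module lies in `^⊥(GP^⊥)`. -/
theorem stmt3 {R : Type u} [CommRing R] (P : ModuleCat.{u} R)
    (hP : GPPureProjective P) :
    ∀ M : ModuleCat.{u} R, MemGPperp M → extVanish 1 P M := by
  intro M hM
  let S := ShortComplex.mk (Injective.ι M) (cokernel.π _) (cokernel.condition _)
  have hS : S.ShortExact := ⟨ShortComplex.exact_of_g_is_cokernel _ (cokernelIsCokernel _)⟩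
  have : Injective S.X₂ := by dsimp [S]; infer_instance
  exact hS.extVanish_of_exists_lift (hP S hS (xPureExact_of_extVanish hS hM))
end

section
/- Let R be a commutative ring. An R-module M is both Gorenstein projective and in GP^⊥ if and only if M is projective; that is, GP ∩ GP^⊥ equals the class of projective R-modules. -/
open CategoryTheory Opposite Limits MonoidalCategory

universe u

variable {R : Type u} [CommRing R]

/-!
A projective module `P` is Gorenstein projective through the contractible complex
`⋯ → P × P → P × P → ⋯`, `(a, b) ↦ (b, 0)`, and `Ext¹(G, P) = 0` for every Gorenstein projective
`G = coker (C₁ → C₀)`: the nonnegative part of the totally acyclic complex `C` is a projective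
resolution of `G`, and `Hom(C, P)` is exact.

Conversely let `M = coker (C₁ → C₀)` be Gorenstein projective with `Ext¹(-, M)` vanishing on
Gorenstein projectives. The cokernel `M' = coker (C₀ → C₋₁)` is again Gorenstein projective, and
computing `Ext¹(M', M)` with the resolution `⋯ → C₀ → C₋₁` shows that the projection `C₀ → M`
factors through `C₀ → C₋₁`. The factorisation is a retraction of the induced map `M → C₋₁`, so
`M` is a direct summand of the projective module `C₋₁`.
-/

namespace ChainComplex

section

variable {V : Type*} [Category V] [HasZeroMorphisms V]

/-- Unlike `CochainComplex.shiftFunctor`, this introduces no sign on the differential. -/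
@[simps]
def reindex (C : ChainComplex V ℤ) (k : ℤ) : ChainComplex V ℤ where
  X i := C.X (i + k)
  d i j := C.d (i + k) (j + k)
  shape i j hij := C.shape _ _ fun h => hij (by simp only [ComplexShape.down_Rel] at h ⊢; omega)
  d_comp_d' _ _ _ _ _ := C.d_comp_d _ _ _

@[simps]
def truncNat (C : ChainComplex V ℤ) : ChainComplex V ℕ where
  X n := C.X n
  d i j := C.d i j
  shape i j hij := C.shape _ _ fun h => hij (by simp only [ComplexShape.down_Rel] at h ⊢; omega)
  d_comp_d' _ _ _ _ _ := C.d_comp_d _ _ _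

@[simps]
def periodic {X : V} (d : X ⟶ X) (hd : d ≫ d = 0) : ChainComplex V ℤ where
  X _ := X
  d i j := if j + 1 = i then d else 0
  shape _ _ h := if_neg h
  d_comp_d' _ _ _ hij hjk := by simp only [ComplexShape.down_Rel] at hij hjk; simp [hij, hjk, hd]

end

variable {V : Type*} [Category V] [Abelian V]

lemma reindex_exactAt {C : ChainComplex V ℤ} {k i : ℤ} (h : C.ExactAt (i + k)) :
    (C.reindex k).ExactAt i := by
  rw [C.exactAt_iff' (i + 1 + k) (i + k) (i - 1 + k) (by rw [prev]; ring) (by rw [next]; ring)]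
    at h
  rw [(C.reindex k).exactAt_iff' (i + 1) i (i - 1) (by simp) (by simp)]
  exact h

lemma truncNat_exactAt_succ {C : ChainComplex V ℤ} {n : ℕ} (h : C.ExactAt (n + 1 : ℕ)) :
    C.truncNat.ExactAt (n + 1) := by
  rw [C.exactAt_iff' (n + 2 : ℕ) (n + 1 : ℕ) n (by rw [prev]; push_cast; ring) (by simp)] at h
  rw [C.truncNat.exactAt_iff' (n + 2) (n + 1) n (by simp) (by simp)]
  exact h

noncomputable def cokernelResolution (C : ChainComplex V ℤ)
    (hproj : ∀ n : ℕ, Projective (C.X n)) (hexact : ∀ n : ℕ, C.ExactAt (n + 1 : ℕ)) :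
    ProjectiveResolution (cokernel (C.truncNat.d 1 0)) where
  complex := C.truncNat
  projective := hproj
  π := (toSingle₀Equiv _ _).symm ⟨cokernel.π _, cokernel.condition _⟩
  quasiIso := ⟨fun n => by
    cases n with
    | zero =>
      rw [quasiIsoAt₀_iff, ShortComplex.quasiIso_iff_of_zeros']
      · refine (ShortComplex.exact_and_epi_g_iff_of_iso ?_).2
          ⟨ShortComplex.exact_of_g_is_cokernel
            (ShortComplex.mk _ _ (cokernel.condition (C.truncNat.d 1 0))) (cokernelIsCokernel _),
            inferInstance⟩
        refine ShortComplex.isoMk (Iso.refl _) (Iso.refl _) (Iso.refl _)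
          ((Category.id_comp _).trans (Category.comp_id _).symm) ?_
        simp only [Iso.refl_hom, HomologicalComplex.shortComplexFunctor'_map_τ₂,
          toSingle₀Equiv_symm_apply_f_zero]
        exact (Category.id_comp _).trans (Category.comp_id _).symm
      · exact C.shape _ _ (by simp)
      all_goals rfl
    | succ n =>
      rw [quasiIsoAt_iff_exactAt' _ _ (exactAt_succ_single_obj _ _)]
      exact truncNat_exactAt_succ (hexact n)⟩

end ChainComplex

lemma eq_comp_comp_of_contracting {C : Type*} [Category C] [Preadditive C] {X Y : C}
    {d k : X ⟶ X} (hdk : d ≫ k + k ≫ d = 𝟙 X) {f : X ⟶ Y} (hf : d ≫ f = 0) :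
    f = d ≫ k ≫ f := by
  conv_lhs => rw [← Category.id_comp f, ← hdk]
  rw [Preadditive.add_comp, Category.assoc, Category.assoc, hf, comp_zero, add_zero]

lemma ModuleCat.apply_apply_eq_of_contracting {X : ModuleCat.{u} R} {d k : X ⟶ X}
    (hdk : d ≫ k + k ≫ d = 𝟙 X) {x : X} (hx : d x = 0) : d (k x) = x := by
  simpa [hx] using congr($hdk x)

lemma CategoryTheory.ProjectiveResolution.subsingleton_ext_one_iff {W : ModuleCat.{u} R}
    (P : ProjectiveResolution W) (M : ModuleCat.{u} R) :
    Subsingleton (((Ext R (ModuleCat.{u} R) 1).obj (op W)).obj M) ↔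
      ∀ f : P.complex.X 1 ⟶ M, P.complex.d 2 1 ≫ f = 0 →
        ∃ g : P.complex.X 0 ⟶ M, f = P.complex.d 1 0 ≫ g := by
  rw [← ModuleCat.isZero_iff_subsingleton, Iso.isZero_iff (P.isoExt 1 M),
    ← HomologicalComplex.exactAt_iff_isZero_homology,
    HomologicalComplex.exactAt_iff' _ 0 1 2 (by simp) (by simp), ShortComplex.moduleCat_exact_iff]
  exact forall₂_congr fun _ _ => exists_congr fun _ => eq_comm

lemma ChainComplex.subsingleton_ext_one_cokernel_iff (C : ChainComplex (ModuleCat.{u} R) ℤ)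
    (hproj : ∀ n : ℕ, Projective (C.X n)) (hexact : ∀ n : ℕ, C.ExactAt (n + 1 : ℕ))
    (M : ModuleCat.{u} R) :
    Subsingleton (((Ext R (ModuleCat.{u} R) 1).obj (op (cokernel (C.d 1 0)))).obj M) ↔
      ∀ f : C.X 1 ⟶ M, C.d 2 1 ≫ f = 0 → ∃ g : C.X 0 ⟶ M, f = C.d 1 0 ≫ g :=
  (C.cokernelResolution hproj hexact).subsingleton_ext_one_iff M

/-- The conditions of `IsGorensteinProjective`, with exactness of `Hom(C, P)` stated at arbitrary
indices `k + 1 = j`, `j + 1 = i` so that it survives reindexing. -/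
structure IsTotallyAcyclic (C : ChainComplex (ModuleCat.{u} R) ℤ) : Prop where
  projective (i : ℤ) : Projective (C.X i)
  exactAt (i : ℤ) : C.ExactAt i
  hom_exact (P : ModuleCat.{u} R) (hP : Projective P) (i j k : ℤ) (hij : j + 1 = i)
    (hjk : k + 1 = j) (f : C.X j ⟶ P) (hf : C.d i j ≫ f = 0) :
    ∃ g : C.X k ⟶ P, f = C.d j k ≫ g

lemma isGorensteinProjective_iff {Q : ModuleCat.{u} R} :
    IsGorensteinProjective Q ↔ ∃ C : ChainComplex (ModuleCat.{u} R) ℤ,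
      IsTotallyAcyclic C ∧ Nonempty (Q ≅ cokernel (C.d 1 0)) := by
  constructor
  · rintro ⟨C, hproj, hexact, hQ, hhom⟩
    refine ⟨C, ⟨hproj, hexact, ?_⟩, hQ⟩
    rintro P hP i j k rfl hjk f hf
    obtain rfl : k = j - 1 := by omega
    exact hhom P hP j f hf
  · rintro ⟨C, hC, hQ⟩
    exact ⟨C, hC.projective, hC.exactAt, hQ,
      fun P hP i => hC.hom_exact P hP (i + 1) i (i - 1) rfl (by omega)⟩

lemma IsTotallyAcyclic.reindex {C : ChainComplex (ModuleCat.{u} R) ℤ} (hC : IsTotallyAcyclic C)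
    (k : ℤ) : IsTotallyAcyclic (C.reindex k) where
  projective i := hC.projective (i + k)
  exactAt i := ChainComplex.reindex_exactAt (hC.exactAt (i + k))
  hom_exact P hP i j l hij hjl := hC.hom_exact P hP (i + k) (j + k) (l + k) (by omega) (by omega)

lemma isTotallyAcyclic_periodic {B : ModuleCat.{u} R} [Projective B] {d k : B ⟶ B}
    (hd : d ≫ d = 0) (hdk : d ≫ k + k ≫ d = 𝟙 B) :
    IsTotallyAcyclic (ChainComplex.periodic d hd) where
  projective _ := ‹_›
  exactAt i := by
    rw [HomologicalComplex.exactAt_iff' _ (i + 1) i (i - 1) (by simp) (by simp),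
      ShortComplex.moduleCat_exact_iff]
    intro x hx
    simp only [HomologicalComplex.shortComplexFunctor'_obj_g, ChainComplex.periodic_d,
      sub_add_cancel, if_true] at hx
    refine ⟨k x, ?_⟩
    simp only [HomologicalComplex.shortComplexFunctor'_obj_f, ChainComplex.periodic_d, if_true]
    exact ModuleCat.apply_apply_eq_of_contracting hdk hx
  hom_exact P _ i j l hij hjl f hf := by
    simp only [ChainComplex.periodic_d, hij, hjl, if_true] at hf ⊢
    exact ⟨k ≫ f, eq_comp_comp_of_contracting hdk hf⟩

lemma isGorensteinProjective_of_projective {M : ModuleCat.{u} R} (hM : Projective M) :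
    IsGorensteinProjective M := by
  let B := ModuleCat.of R (M × M)
  let d : B ⟶ B := ModuleCat.ofHom (LinearMap.inl R M M ∘ₗ LinearMap.snd R M M)
  let k : B ⟶ B := ModuleCat.ofHom (LinearMap.inr R M M ∘ₗ LinearMap.fst R M M)
  let π : B ⟶ M := ModuleCat.ofHom (LinearMap.snd R M M)
  have hd : d ≫ d = 0 := by ext <;> rfl
  have hdk : d ≫ k + k ≫ d = 𝟙 B := by
    refine ModuleCat.hom_ext (LinearMap.ext fun ⟨a, b⟩ => ?_)
    change ((0 : M), b) + (a, (0 : M)) = (a, b)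
    simp
  have hdπ : d ≫ π = 0 := by ext <;> rfl
  have hexact : (ShortComplex.mk d π hdπ).Exact := by
    rw [ShortComplex.moduleCat_exact_iff]
    rintro ⟨a, b⟩ (hb : b = 0)
    exact ⟨(0, a), by rw [hb]; rfl⟩
  have : Epi π := (ModuleCat.epi_iff_surjective _).2 LinearMap.snd_surjective
  have : Projective B := Projective.of_iso (ModuleCat.biprodIsoProd M M) inferInstance
  refine isGorensteinProjective_iff.2 ⟨_, isTotallyAcyclic_periodic hd hdk, ⟨?_⟩⟩
  exact (hexact.gIsCokernel.coconePointUniqueUpToIso (cokernelIsCokernel d)).trans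
    (cokernelIsoOfEq (by simp))

lemma memGPperp_of_projective {M : ModuleCat.{u} R} (hM : Projective M) : MemGPperp M := by
  intro Q hQ
  obtain ⟨C, hC, ⟨e⟩⟩ := isGorensteinProjective_iff.1 hQ
  have hext := (C.subsingleton_ext_one_cokernel_iff (fun n => hC.projective n)
    (fun n => hC.exactAt _) M).2 fun f hf => hC.hom_exact M hM 2 1 0 rfl rfl f hf
  change Subsingleton _
  rw [← ModuleCat.isZero_iff_subsingleton] at hext ⊢
  exact hext.of_iso (((Ext R _ 1).mapIso e.op).app M).symm

lemma projective_of_isGorensteinProjective_of_memGPperp {M : ModuleCat.{u} R}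
    (hM : IsGorensteinProjective M) (hperp : MemGPperp M) : Projective M := by
  obtain ⟨C, hC, ⟨e⟩⟩ := isGorensteinProjective_iff.1 hM
  have hC' := hC.reindex (-1)
  have hext := hperp _ (isGorensteinProjective_iff.2 ⟨_, hC', ⟨Iso.refl _⟩⟩)
  obtain ⟨r, hr⟩ : ∃ r : C.X (-1) ⟶ M, cokernel.π (C.d 1 0) ≫ e.inv = C.d 0 (-1) ≫ r :=
    ((C.reindex (-1)).subsingleton_ext_one_cokernel_iff (fun n => hC'.projective n)
      (fun n => hC'.exactAt _) M).1 hext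
      (cokernel.π (C.d 1 0) ≫ e.inv) ((cokernel.condition_assoc _ _).trans zero_comp)
  have := hC.projective (-1)
  refine Retract.projective ⟨e.hom ≫ cokernel.desc _ (C.d 0 (-1)) (C.d_comp_d _ _ _), r, ?_⟩
  rw [← cancel_epi (cokernel.π (C.d 1 0) ≫ e.inv)]
  simpa using hr.symm

/-- `GP ∩ GP^⊥` is exactly the class of projective modules. -/
theorem stmt12 {R : Type u} [CommRing R] (M : ModuleCat.{u} R) :
    (IsGorensteinProjective M ∧ MemGPperp M) ↔ Projective M :=
  ⟨fun ⟨hGP, hperp⟩ => projective_of_isGorensteinProjective_of_memGPperp hGP hperp,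
    fun hM => ⟨isGorensteinProjective_of_projective hM, memGPperp_of_projective hM⟩⟩
end

section
/- Let R be a commutative ring. An R-module M is both Gorenstein injective and in ^⊥GI if and only if M is injective; that is, GI ∩ ^⊥GI equals the class of injective R-modules. -/
open CategoryTheory Opposite Limits MonoidalCategory

universe u

variable {R : Type u} [CommRing R]

/-!
If `M` is Gorenstein injective, witnessed by a totally acyclic complex `C` with `M ≅ ker d⁰`, then
`0 → ker d⁻¹ → C⁻¹ → M → 0` is exact and `ker d⁻¹` is again Gorenstein injective. So if moreover
`Ext¹(M, GI) = 0`, this sequence splits and `M` is a direct summand of the injective module `C⁻¹`.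

Conversely an injective module `M` is the kernel of the totally acyclic complex
`⋯ → M ⊕ M → M ⊕ M → ⋯` with differential `(a, b) ↦ (b, 0)`, and for `E = ker d⁰` Gorenstein
injective the sequence `0 → E → C⁰ → ker d¹ → 0` has injective middle term and stays exact under
`Hom(M, -)` by total acyclicity, so `Ext¹(M, E) = 0`.
-/

namespace CategoryTheory

section Ext

variable {A : Type*} [Ring A] {C : Type*} [Category C] [Abelian C]

/-- `P.π.f 0` has codomain `((single₀ C).obj X).X 0`, which is `X` only up to unfolding; this
restates its cokernel property with codomain `X`, so that rewriting works. -/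
lemma ProjectiveResolution.exists_cokernel {X : C} (P : ProjectiveResolution X) :
    ∃ π : P.complex.X 0 ⟶ X, Epi π ∧ P.complex.d 1 0 ≫ π = 0 ∧
      ∀ {Y : C} (h : P.complex.X 0 ⟶ Y), P.complex.d 1 0 ≫ h = 0 → ∃ m : X ⟶ Y, π ≫ m = h :=
  ⟨P.π.f 0, inferInstanceAs (Epi (P.π.f 0)), P.complex_d_comp_π_f_zero,
    fun h hh => ⟨P.exact₀.desc h hh, P.exact₀.g_desc h hh⟩⟩

variable [Linear A C] [EnoughProjectives C]

lemma subsingleton_ext_one_iff {X : C} (P : ProjectiveResolution X) (Y : C) :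
    Subsingleton (((Ext A C 1).obj (op X)).obj Y) ↔
      ∀ β : P.complex.X 1 ⟶ Y, P.complex.d 2 1 ≫ β = 0 →
        ∃ γ : P.complex.X 0 ⟶ Y, P.complex.d 1 0 ≫ γ = β := by
  rw [← ModuleCat.isZero_iff_subsingleton, (P.isoExt 1 Y).isZero_iff,
    ← HomologicalComplex.exactAt_iff_isZero_homology,
    HomologicalComplex.exactAt_iff' _ 0 1 2 (by simp) (by simp),
    ShortComplex.moduleCat_exact_iff]
  exact ⟨fun h β hβ => h β hβ, fun h β hβ => h β hβ⟩

variable (A) in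
lemma subsingleton_ext_one_of_injective (X J : C) [Injective J] :
    Subsingleton (((Ext A C 1).obj (op X)).obj J) := by
  rw [subsingleton_ext_one_iff (ProjectiveResolution.of X)]
  intro β hβ
  exact ⟨_, ((ProjectiveResolution.of X).exact_succ 0).comp_descToInjective β hβ⟩

namespace ShortComplex.ShortExact

variable {S : ShortComplex C} (hS : S.ShortExact) {X : C}
include hS

lemma exists_lift_of_subsingleton_ext_one
    (hExt : Subsingleton (((Ext A C 1).obj (Opposite.op X)).obj S.X₁)) (φ : X ⟶ S.X₃) :
    ∃ ψ : X ⟶ S.X₂, ψ ≫ S.g = φ := by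
  have := hS.mono_f
  have := hS.epi_g
  let P := ProjectiveResolution.of X
  obtain ⟨π, _, hdπ, hπ⟩ := P.exists_cokernel
  obtain ⟨α, hα⟩ : ∃ α : P.complex.X 0 ⟶ S.X₂, α ≫ S.g = π ≫ φ :=
    ⟨_, Projective.factorThru_comp _ _⟩
  have hdα : (P.complex.d 1 0 ≫ α) ≫ S.g = 0 := by
    rw [Category.assoc, hα, reassoc_of% hdπ, zero_comp]
  let β := hS.exact.lift _ hdα
  have hβ : β ≫ S.f = P.complex.d 1 0 ≫ α := hS.exact.lift_f _ _
  have hcocycle : P.complex.d 2 1 ≫ β = 0 := by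
    rw [← cancel_mono S.f, Category.assoc, hβ, P.complex.d_comp_d_assoc, zero_comp, zero_comp]
  obtain ⟨γ, hγ⟩ := (subsingleton_ext_one_iff P S.X₁).1 hExt β hcocycle
  obtain ⟨ψ, hψ⟩ := hπ (α - γ ≫ S.f)
    (by rw [Preadditive.comp_sub, reassoc_of% hγ, hβ, sub_self])
  refine ⟨ψ, (cancel_epi π).1 ?_⟩
  rw [reassoc_of% hψ, Preadditive.sub_comp, hα, Category.assoc, S.zero, comp_zero, sub_zero]

lemma subsingleton_ext_one_of_forall_lift
    (hExt : Subsingleton (((Ext A C 1).obj (Opposite.op X)).obj S.X₂))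
    (hlift : ∀ φ : X ⟶ S.X₃, ∃ ψ : X ⟶ S.X₂, ψ ≫ S.g = φ) :
    Subsingleton (((Ext A C 1).obj (Opposite.op X)).obj S.X₁) := by
  have := hS.mono_f
  let P := ProjectiveResolution.of X
  obtain ⟨π, _, hdπ, hπ⟩ := P.exists_cokernel
  rw [subsingleton_ext_one_iff P] at hExt ⊢
  intro β hβ
  obtain ⟨h, hh⟩ := hExt (β ≫ S.f) (by rw [reassoc_of% hβ, zero_comp])
  obtain ⟨m, hm⟩ := hπ (h ≫ S.g) (by rw [reassoc_of% hh, S.zero, comp_zero])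
  obtain ⟨ψ, hψ⟩ := hlift m
  have hker : (h - π ≫ ψ) ≫ S.g = 0 := by
    rw [Preadditive.sub_comp, Category.assoc, hψ, hm, sub_self]
  refine ⟨hS.exact.lift _ hker, ?_⟩
  rw [← cancel_mono S.f, Category.assoc, hS.exact.lift_f, Preadditive.comp_sub, hh,
    reassoc_of% hdπ, zero_comp, sub_zero]

end ShortComplex.ShortExact

end Ext

end CategoryTheory

namespace HomologicalComplex

variable {V : Type*} [Category V] [Abelian V] {ι : Type*} {c : ComplexShape ι}

noncomputable abbrev kernelSequence (K : HomologicalComplex V c) (i j k : ι) : ShortComplex V :=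
  ShortComplex.mk (kernel.ι (K.d i j)) (kernel.lift (K.d j k) (K.d i j) (K.d_comp_d i j k))
    (by ext; simp)

lemma shortExact_kernelSequence (K : HomologicalComplex V c) {i j k : ι}
    (hij : c.Rel i j) (hjk : c.Rel j k) (hj : K.ExactAt j) :
    (K.kernelSequence i j k).ShortExact where
  exact := ShortComplex.exact_of_f_is_kernel _
    (isKernelOfComp (kernel.ι (K.d j k)) (K.d i j) (kernelIsKernel (K.d i j))
      (K.kernelSequence i j k).zero (kernel.lift_ι _ _ _))
  mono_f := by dsimp [kernelSequence]; infer_instance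
  epi_g := ((K.exactAt_iff' i j k (c.prev_eq' hij) (c.next_eq' hjk)).1 hj).epi_kernelLift

end HomologicalComplex

namespace CochainComplex

variable {V : Type*} [Category V] [Abelian V]

/-- The shift `X^i ↦ X^(i + n)` without the sign twist of `CategoryTheory.shiftFunctor`. -/
def naiveShift (K : CochainComplex V ℤ) (n : ℤ) : CochainComplex V ℤ where
  X i := K.X (i + n)
  d i j := K.d (i + n) (j + n)
  shape i j h := K.shape _ _ fun h' => h (by simp only [ComplexShape.up_Rel] at h' ⊢; omega)
  d_comp_d' _ _ _ _ _ := K.d_comp_d _ _ _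

/-- The conditions on the complex in `IsGorensteinInjective`; the indices of the lifting condition
are tied by equations rather than written as `i - 1`, `i + 1`, so that reindexing needs no casts. -/
structure IsTotallyAcyclicInjective (K : CochainComplex V ℤ) : Prop where
  injective (i : ℤ) : Injective (K.X i)
  exactAt (i : ℤ) : K.ExactAt i
  exists_lift (I : V) [Injective I] {i j k : ℤ} (hij : i + 1 = j) (hjk : j + 1 = k)
    (f : I ⟶ K.X j) (hf : f ≫ K.d j k = 0) : ∃ g : I ⟶ K.X i, g ≫ K.d i j = f

lemma IsTotallyAcyclicInjective.naiveShift {K : CochainComplex V ℤ}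
    (hK : K.IsTotallyAcyclicInjective) (n : ℤ) : (K.naiveShift n).IsTotallyAcyclicInjective where
  injective i := hK.injective (i + n)
  exactAt i := by
    have := hK.exactAt (i + n)
    rw [HomologicalComplex.exactAt_iff' _ (i - 1 + n) (i + n) (i + 1 + n) (by simp; omega)
      (by simp; omega)] at this
    rwa [HomologicalComplex.exactAt_iff' _ (i - 1) i (i + 1) (by simp) (by simp)]
  exists_lift I _ i j k hij hjk f hf := hK.exists_lift I (by omega) (by omega) f hf

end CochainComplex

lemma isGorensteinInjective_iff (E : ModuleCat.{u} R) :
    IsGorensteinInjective E ↔ ∃ C : CochainComplex (ModuleCat.{u} R) ℤ,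
      C.IsTotallyAcyclicInjective ∧ Nonempty (E ≅ kernel (C.d 0 1)) := by
  constructor
  · rintro ⟨C, hinj, hex, he, hlift⟩
    refine ⟨C, ⟨hinj, hex, fun I _ i j k hij hjk f hf => ?_⟩, he⟩
    obtain rfl : i = j - 1 := by omega
    subst hjk
    obtain ⟨g, hg⟩ := hlift I ‹_› j f hf
    exact ⟨g, hg.symm⟩
  · rintro ⟨C, hC, he⟩
    refine ⟨C, hC.injective, hC.exactAt, he, fun I _ i f hf => ?_⟩
    obtain ⟨g, hg⟩ := hC.exists_lift I (i := i - 1) (by omega) rfl f hf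
    exact ⟨g, hg.symm⟩

lemma CochainComplex.IsTotallyAcyclicInjective.isGorensteinInjective_kernel
    {C : CochainComplex (ModuleCat.{u} R) ℤ} (hC : C.IsTotallyAcyclicInjective) {i j : ℤ}
    (hij : i + 1 = j) : IsGorensteinInjective (kernel (C.d i j)) :=
  (isGorensteinInjective_iff _).2 ⟨C.naiveShift i, hC.naiveShift i,
    ⟨kernel.mapIso _ _ (C.XIsoOfEq (by omega) : _ ≅ (C.naiveShift i).X 0)
      (C.XIsoOfEq (by omega) : _ ≅ (C.naiveShift i).X 1)
      (show C.d i j ≫ (C.XIsoOfEq _).hom = (C.XIsoOfEq _).hom ≫ C.d (0 + i) (1 + i) by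
        simp)⟩⟩

namespace ModuleCat

variable (M : ModuleCat.{u} R)

def prodShift : ModuleCat.of R (M × M) ⟶ ModuleCat.of R (M × M) :=
  ofHom ((LinearMap.inl R M M).comp (LinearMap.snd R M M))

lemma prodShift_comp_prodShift : prodShift M ≫ prodShift M = 0 :=
  ModuleCat.hom_ext (LinearMap.ext fun _ => rfl)

noncomputable def prodShiftComplex : CochainComplex (ModuleCat.{u} R) ℤ :=
  CochainComplex.of (fun _ => ModuleCat.of R (M × M)) (fun _ => prodShift M)
    (fun _ => prodShift_comp_prodShift M)

lemma prodShiftComplex_d (i : ℤ) : (prodShiftComplex M).d i (i + 1) = prodShift M := by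
  simp [prodShiftComplex]

lemma prodShiftComplex_exactAt (i : ℤ) : (prodShiftComplex M).ExactAt i := by
  obtain ⟨i, rfl⟩ : ∃ h, i = h + 1 := ⟨i - 1, by omega⟩
  rw [HomologicalComplex.exactAt_iff' _ i (i + 1) (i + 1 + 1) (by simp) (by simp),
    ShortComplex.moduleCat_exact_iff]
  intro x hx
  simp only [HomologicalComplex.shortComplexFunctor'_obj_f,
    HomologicalComplex.shortComplexFunctor'_obj_g, prodShiftComplex_d] at hx ⊢
  exact ⟨(0, x.1), Prod.ext rfl (congrArg Prod.fst hx).symm⟩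

lemma range_inl_eq_ker_prodShift :
    LinearMap.range (LinearMap.inl R M M) = LinearMap.ker M.prodShift.hom := by
  rw [prodShift, hom_ofHom, LinearMap.ker_comp_of_ker_eq_bot _
    (LinearMap.ker_eq_bot_of_injective LinearMap.inl_injective), LinearMap.ker_snd]

noncomputable def isoKernelProdShift : M ≅ kernel M.prodShift :=
  ((LinearEquiv.ofInjective _ LinearMap.inl_injective).trans
    (LinearEquiv.ofEq _ _ M.range_inl_eq_ker_prodShift)).toModuleIso ≪≫
    (kernelIsoKer M.prodShift).symm

end ModuleCat

lemma isGorensteinInjective_of_injective (M : ModuleCat.{u} R) [Injective M] :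
    IsGorensteinInjective M := by
  have : Injective (ModuleCat.of R (M × M)) :=
    Injective.of_iso (ModuleCat.biprodIsoProd M M) inferInstance
  refine (isGorensteinInjective_iff M).2
    ⟨M.prodShiftComplex, ⟨fun _ => this, M.prodShiftComplex_exactAt, ?_⟩, ⟨?_⟩⟩
  · intro I _ i j k hij hjk f hf
    subst hij hjk
    rw [ModuleCat.prodShiftComplex_d] at hf ⊢
    refine ⟨f ≫ ModuleCat.ofHom (LinearMap.inr R M M ∘ₗ LinearMap.fst R M M), ?_⟩
    ext a
    exact Prod.ext rfl (congrArg Prod.fst (ConcreteCategory.congr_hom hf a)).symm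
  · exact M.isoKernelProdShift ≪≫ kernelIsoOfEq (M.prodShiftComplex_d 0).symm

lemma extVanish_one_of_injective_of_isGorensteinInjective (M : ModuleCat.{u} R) [Injective M]
    {E : ModuleCat.{u} R} (hE : IsGorensteinInjective E) : extVanish 1 M E := by
  obtain ⟨C, hC, ⟨φ⟩⟩ := (isGorensteinInjective_iff E).1 hE
  have := hC.injective 0
  have hS := C.shortExact_kernelSequence (i := 0) (j := 1) (k := 2) rfl rfl (hC.exactAt 1)
  refine (((Ext R _ 1).obj (op M)).mapIso φ).toLinearEquiv.toEquiv.subsingleton_congr.2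
    (hS.subsingleton_ext_one_of_forall_lift (subsingleton_ext_one_of_injective R M _) ?_)
  intro ψ
  obtain ⟨g, hg⟩ := hC.exists_lift M (i := 0) rfl rfl (ψ ≫ kernel.ι _) (by simp)
  refine ⟨g, ?_⟩
  rw [← cancel_mono (kernel.ι _)]
  simpa using hg

lemma injective_of_isGorensteinInjective_of_memPerpGI {M : ModuleCat.{u} R}
    (hGI : IsGorensteinInjective M) (hperp : MemPerpGI M) : Injective M := by
  obtain ⟨C, hC, ⟨φ⟩⟩ := (isGorensteinInjective_iff M).1 hGI
  have := hC.injective (-1)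
  have hS := C.shortExact_kernelSequence (i := -1) (j := 0) (k := 1) (by simp) (by simp)
    (hC.exactAt 0)
  obtain ⟨s, hs⟩ := hS.exists_lift_of_subsingleton_ext_one
    ((((Ext R _ 1).mapIso φ.op).app _).toLinearEquiv.toEquiv.subsingleton_congr.2
      (hperp _ (hC.isGorensteinInjective_kernel (i := -1) (j := 0) (by simp)))) (𝟙 _)
  have : Injective (kernel (C.d 0 1)) := Retract.injective ⟨s, _, hs⟩
  exact Injective.of_iso φ.symm this

/-- `GI ∩ ^⊥GI` is exactly the class of injective modules. -/
theorem stmt13 {R : Type u} [CommRing R] (M : ModuleCat.{u} R) :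
    (IsGorensteinInjective M ∧ MemPerpGI M) ↔ Injective M :=
  ⟨fun ⟨hGI, hperp⟩ => injective_of_isGorensteinInjective_of_memPerpGI hGI hperp,
    fun _ => ⟨isGorensteinInjective_of_injective M,
      fun _ hE => extVanish_one_of_injective_of_isGorensteinInjective M hE⟩⟩
end
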